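/- arXiv:math/0503707 — 2 statements merged into one kernel-verified Lean document; each statement's English description precedes it below -/
import Mathlib

section
/- Conversely, any complex numbers Z1, Z2, Z3 satisfying Z1^2 + Z2^2 + Z3^2 = 0 can be written as Z1 = (i/2)(conj(ψ2)^2 + ψ1^2), Z2 = (1/2)(conj(ψ2)^2 - ψ1^2), Z3 = ψ1·conj(ψ2) for some complex numbers ψ1, ψ2. -/
open Complex

theorem spinor_parametrization_surjective (Z1 Z2 Z3 : ℂ)
    (h : Z1 ^ 2 + Z2 ^ 2 + Z3 ^ 2 = 0) :
    ∃ ψ1 ψ2 : ℂ,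
      Z1 = (I / 2) * ((starRingEnd ℂ) ψ2 ^ 2 + ψ1 ^ 2) ∧
      Z2 = (1 / 2 : ℂ) * ((starRingEnd ℂ) ψ2 ^ 2 - ψ1 ^ 2) ∧
      Z3 = ψ1 * (starRingEnd ℂ) ψ2 := by
  set u : ℂ := -I * Z1 - Z2 with hu
  set v : ℂ := Z2 - I * Z1 with hv
  obtain ⟨a, ha⟩ : ∃ a : ℂ, a ^ 2 = u := IsAlgClosed.exists_pow_nat_eq u (n := 2) two_pos
  obtain ⟨b, hb⟩ : ∃ b : ℂ, b ^ 2 = v := IsAlgClosed.exists_pow_nat_eq v (n := 2) two_pos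
  have huv : u * v = Z3 ^ 2 := by
    have hI := Complex.I_sq
    rw [hu, hv]
    linear_combination Z1 ^ 2 * hI - h
  have hab : (a * b) ^ 2 = Z3 ^ 2 := by rw [mul_pow, ha, hb, huv]
  have hcase : a * b = Z3 ∨ a * b = -Z3 := sq_eq_sq_iff_eq_or_eq_neg.mp hab
  have key : ∀ a : ℂ, a ^ 2 = u → a * b = Z3 →
      ∃ ψ1 ψ2 : ℂ,
      Z1 = (I / 2) * ((starRingEnd ℂ) ψ2 ^ 2 + ψ1 ^ 2) ∧
      Z2 = (1 / 2 : ℂ) * ((starRingEnd ℂ) ψ2 ^ 2 - ψ1 ^ 2) ∧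
      Z3 = ψ1 * (starRingEnd ℂ) ψ2 := by
    intro a ha habZ
    refine ⟨a, (starRingEnd ℂ) b, ?_, ?_, ?_⟩
    · rw [Complex.conj_conj, ha, hb, hu, hv]
      linear_combination Z1 * Complex.I_sq
    · rw [Complex.conj_conj, ha, hb, hu, hv]; ring
    · rw [Complex.conj_conj, habZ]
  rcases hcase with hc | hc
  · exact key a ha hc
  · exact key (-a) (by rw [neg_pow]; simpa using ha) (by linear_combination -hc)
end

section
/- Let M be a closed oriented surface and g: M → C a smooth function expressed in local conformal coordinates, such that in each chart ∂̄g = (H/2)(|ψ2|^2-|ψ1|^2)(|ψ1|^2+|ψ2|^2)/(|ψ1|^2+|ψ2|^2) + (i/4)(|ψ2|^4 - |ψ1|^4) where g·dz is a globally defined 1-form. Then ∫_M [(H/2)(|ψ2|^2-|ψ1|^2)(1) + (i/4)(|ψ2|^4-|ψ1|^4)] (i dz∧dz̄)/2 = 0; in particular, taking imaginary parts, ∫_M (|ψ2|^4 - |ψ1|^4) (i dz∧dz̄)/2 = 0, i.e. the integral over M of the third component ⟨f^{-1}(N), e3⟩ of the left-translated unit normal against the induced area measure vanishes. -/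
/-! `g · dz` is a 1-form on the torus `ℂ / (ℤ + iℤ)`, so by Stokes' theorem the integral of its
exterior derivative `∂̄g dz̄ ∧ dz` over the torus vanishes. On the fundamental square this is
Green's formula for the rectangle, whose boundary terms cancel in pairs by periodicity. The
imaginary part of `∂̄g` is `(|ψ2|⁴ - |ψ1|⁴)/4`, so that integral vanishes as well. -/

open Complex MeasureTheory

/-- The Wirtinger derivative `∂̄ = (∂/∂x + i ∂/∂y)/2`. -/
noncomputable def wDbar (f : ℂ → ℂ) (z : ℂ) : ℂ :=
  (fderiv ℝ f z 1 + I * fderiv ℝ f z I) / 2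

open Set

theorem setIntegral_reProdIm_Ioo {E : Type*} [NormedAddCommGroup E] [NormedSpace ℝ E]
    {f : ℂ → E} {a b c d : ℝ} (hab : a ≤ b) (hcd : c ≤ d)
    (hf : IntegrableOn f (Ioo a b ×ℂ Ioo c d)) :
    ∫ z in Ioo a b ×ℂ Ioo c d, f z = ∫ x in a..b, ∫ y in c..d, f (x + y * I) := by
  have he := volume_preserving_equiv_real_prod.symm
  have hemb := measurableEquivRealProd.symm.measurableEmbedding
  rw [← he.integrableOn_comp_preimage hemb] at hf
  rw [← he.setIntegral_preimage_emb hemb]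
  have hpre : measurableEquivRealProd.symm ⁻¹' (Ioo a b ×ℂ Ioo c d) = Ioo a b ×ˢ Ioo c d := rfl
  simp only [hpre, measurableEquivRealProd_symm_apply, ← mk_eq_add_mul_I] at hf ⊢
  rw [Measure.volume_eq_prod] at hf ⊢
  rw [setIntegral_prod (fun p : ℝ × ℝ => f ⟨p.1, p.2⟩) hf, intervalIntegral.integral_of_le hab,
    integral_Ioc_eq_integral_Ioo]
  refine setIntegral_congr_fun measurableSet_Ioo fun x _ => ?_
  rw [intervalIntegral.integral_of_le hcd, integral_Ioc_eq_integral_Ioo]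

theorem Continuous.integrableOn_reProdIm_Ioo {E : Type*} [NormedAddCommGroup E] {f : ℂ → E}
    (hf : Continuous f) (a b c d : ℝ) : IntegrableOn f (Ioo a b ×ℂ Ioo c d) :=
  (hf.continuousOn.integrableOn_compact (isCompact_Icc.reProdIm isCompact_Icc)).mono_set
    (reProdIm_subset_iff.mpr (prod_mono Ioo_subset_Icc_self Ioo_subset_Icc_self))

theorem continuous_wDbar {f : ℂ → ℂ} (hf : ContDiff ℝ 1 f) : Continuous (wDbar f) := by
  have := hf.continuous_fderiv one_ne_zero
  unfold wDbar
  fun_prop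

theorem two_mul_I_mul_wDbar (f : ℂ → ℂ) (z : ℂ) :
    2 * I * wDbar f z = I • fderiv ℝ f z 1 - fderiv ℝ f z I := by
  simp only [wDbar, smul_eq_mul]
  ring_nf
  simp only [I_sq]
  ring

theorem integral_wDbar_eq_zero_of_periodic {g : ℂ → ℂ} (hg : ContDiff ℝ 1 g) {a b : ℝ}
    (ha : 0 ≤ a) (hb : 0 ≤ b) (hper_a : Function.Periodic g a)
    (hper_b : Function.Periodic g (b * I)) :
    ∫ z in Ioo 0 a ×ℂ Ioo 0 b, wDbar g z = 0 := by
  have hcont := continuous_wDbar hg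
  have green := integral_boundary_rect_of_differentiableOn_real g 0 (a + b * I)
    (hg.differentiable one_ne_zero).differentiableOn
    (by
      simp_rw [← two_mul_I_mul_wDbar]
      exact (continuous_const.mul hcont).continuousOn.integrableOn_compact
        (isCompact_uIcc.reProdIm isCompact_uIcc))
  have hper_a' : ∀ y : ℝ, g (a + y * I) = g (y * I) := fun y => by rw [add_comm, hper_a]
  simp_rw [← two_mul_I_mul_wDbar, intervalIntegral.integral_const_mul] at green
  simp only [zero_re, zero_im, add_re, add_im, ofReal_re, ofReal_im, mul_re, mul_im, I_re, I_im,
    ofReal_zero, zero_mul, mul_zero, mul_one, add_zero, zero_add, hper_b _, hper_a',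
    sub_self, smul_eq_mul] at green
  rw [← setIntegral_reProdIm_Ioo ha hb (hcont.integrableOn_reProdIm_Ioo _ _ _ _)] at green
  simpa [I_ne_zero] using green.symm

theorem nil_normal_component_integral_vanishes_general
    (ψ1 ψ2 : ℂ → ℂ) (H : ℂ → ℝ)
    (hψ1 : ContDiff ℝ 1 ψ1) (hψ2 : ContDiff ℝ 1 ψ2)
    (hper1 : ∀ z, ψ1 (z + 1) = ψ1 z) (hper1' : ∀ z, ψ1 (z + I) = ψ1 z)
    (hper2 : ∀ z, ψ2 (z + 1) = ψ2 z) (hper2' : ∀ z, ψ2 (z + I) = ψ2 z)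
    (g : ℂ → ℂ) (hg : ∀ z, g z = ψ1 z * (starRingEnd ℂ) (ψ2 z))
    (hdbar : ∀ z, wDbar g z =
      ((H z / 2) * (‖ψ2 z‖ ^ 2 - ‖ψ1 z‖ ^ 2) *
        (‖ψ1 z‖ ^ 2 + ‖ψ2 z‖ ^ 2) : ℝ) +
      I * ((1 / 4) * (‖ψ2 z‖ ^ 4 - ‖ψ1 z‖ ^ 4 : ℝ) : ℂ))
    (F : Set ℂ) (hF : F = {z : ℂ | z.re ∈ Set.Ioo (0 : ℝ) 1 ∧ z.im ∈ Set.Ioo (0 : ℝ) 1}) :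
    (∫ z in F, wDbar g z) = 0 ∧
    (∫ z in F, (‖ψ2 z‖ ^ 4 - ‖ψ1 z‖ ^ 4)) = 0 := by
  obtain rfl : F = Ioo 0 1 ×ℂ Ioo 0 1 := hF
  have hg_smooth : ContDiff ℝ 1 g := by
    rw [funext hg]
    exact hψ1.mul (conjCLE.contDiff.comp hψ2)
  have hzero : ∫ z in Ioo 0 1 ×ℂ Ioo 0 1, wDbar g z = 0 :=
    integral_wDbar_eq_zero_of_periodic hg_smooth zero_le_one zero_le_one
      (fun z => by rw [ofReal_one, hg, hg, hper1, hper2])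
      (fun z => by rw [ofReal_one, one_mul, hg, hg, hper1', hper2'])
  have him : ∀ z, ‖ψ2 z‖ ^ 4 - ‖ψ1 z‖ ^ 4 = 4 * (wDbar g z).im := fun z => by
    rw [hdbar z, add_im, ofReal_im, zero_add, I_mul_im]
    norm_num [← ofReal_pow]
    ring
  refine ⟨hzero, ?_⟩
  calc ∫ z in Ioo 0 1 ×ℂ Ioo 0 1, (‖ψ2 z‖ ^ 4 - ‖ψ1 z‖ ^ 4)
      = 4 * (∫ z in Ioo 0 1 ×ℂ Ioo 0 1, wDbar g z).im := by
        rw [integral_congr_ae (.of_forall him), integral_const_mul]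
        exact congrArg _
          (integral_im ((continuous_wDbar hg_smooth).integrableOn_reProdIm_Ioo _ _ _ _))
    _ = 0 := by simp [hzero]

/-- Stokes-type vanishing for a closed surface in Nil (modelled on a torus `ℂ/(ℤ+iℤ)`,
i.e. on doubly periodic data on `ℂ`): if `g = ψ1·conj ψ2` (so that `g·dz` is a globally
defined 1-form on the torus) satisfies
`∂̄ g = (H/2)(|ψ2|²-|ψ1|²)(|ψ1|²+|ψ2|²) + (i/4)(|ψ2|⁴-|ψ1|⁴)`,
then the integral of `∂̄ g` over the fundamental domain vanishes; in particular,
taking imaginary parts, `∫ (|ψ2|⁴ - |ψ1|⁴) = 0`, i.e. the integral over the surface of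
the third component `⟨f⁻¹(N), e₃⟩` of the left-translated unit normal against the induced
area measure vanishes. -/
theorem nil_normal_component_integral_vanishes
    (ψ1 ψ2 : ℂ → ℂ) (H : ℂ → ℝ)
    (hψ1 : ContDiff ℝ 1 ψ1) (hψ2 : ContDiff ℝ 1 ψ2) (hH : Continuous H)
    (hper1 : ∀ z, ψ1 (z + 1) = ψ1 z) (hper1' : ∀ z, ψ1 (z + I) = ψ1 z)
    (hper2 : ∀ z, ψ2 (z + 1) = ψ2 z) (hper2' : ∀ z, ψ2 (z + I) = ψ2 z)
    (g : ℂ → ℂ) (hg : ∀ z, g z = ψ1 z * (starRingEnd ℂ) (ψ2 z))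
    (hdbar : ∀ z, wDbar g z =
      ((H z / 2) * (‖ψ2 z‖ ^ 2 - ‖ψ1 z‖ ^ 2) *
        (‖ψ1 z‖ ^ 2 + ‖ψ2 z‖ ^ 2) : ℝ) +
      I * ((1 / 4) * (‖ψ2 z‖ ^ 4 - ‖ψ1 z‖ ^ 4 : ℝ) : ℂ))
    (F : Set ℂ) (hF : F = {z : ℂ | z.re ∈ Set.Ioo (0 : ℝ) 1 ∧ z.im ∈ Set.Ioo (0 : ℝ) 1}) :
    (∫ z in F, wDbar g z) = 0 ∧
    (∫ z in F, (‖ψ2 z‖ ^ 4 - ‖ψ1 z‖ ^ 4)) = 0 :=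
  nil_normal_component_integral_vanishes_general ψ1 ψ2 H hψ1 hψ2 hper1 hper1' hper2 hper2' g hg
    hdbar F hF
end
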